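/- arXiv:1907.05481 — 2 statements merged into one kernel-verified Lean document; each statement's English description precedes it below -/
import Mathlib

section
/- In a quantitative reachability game, if a Nash equilibrium σ from v₀ has a Pareto optimal cost profile (minimal in the componentwise order among cost profiles of all plays from v₀), then Cost_i(outcome of σ from v₀) ≤ |V|·|Π| for every player i who visits his target set along the outcome. -/
open scoped Classical

structure Arena (V : Type) where
  E : V → V → Prop
  succ : ∀ v, ∃ w, E v w

variable {V P : Type}

/-- An infinite play: consecutive vertices are connected by edges. -/
def IsPlay (A : Arena V) (ρ : ℕ → V) : Prop := ∀ k, A.E (ρ k) (ρ (k + 1))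

/-- Cost: least index of a visit to `F`, or `⊤` if never visited. -/
noncomputable def cost (F : Set V) (ρ : ℕ → V) : ℕ∞ :=
  ⨅ (k : ℕ) (_ : ρ k ∈ F), (k : ℕ∞)

/-- Qualitative gain: `1` if the play visits `F`, else `0`. -/
noncomputable def gain (F : Set V) (ρ : ℕ → V) : ℕ :=
  if ∃ n, ρ n ∈ F then 1 else 0

/-- The set of players whose target set is visited along the play. -/
def visit (F : P → Set V) (ρ : ℕ → V) : Set P := {i | ∃ n, ρ n ∈ F i}

/-- The set of players whose target set is visited within the prefix `ρ₀…ρₖ`. -/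
def visitPrefix (F : P → Set V) (ρ : ℕ → V) (k : ℕ) : Set P := {i | ∃ n ≤ k, ρ n ∈ F i}

/-- A multiplayer reachability game: an arena, an owner for each vertex,
and a target set for each player. -/
structure Game (P V : Type) extends Arena V where
  owner : V → P
  F : P → Set V

/-- A strategy maps (past history, current vertex) to the next vertex. -/
abbrev Strat (V : Type) := List V → V → V

def IsStrategy (A : Arena V) (s : Strat V) : Prop := ∀ p v, A.E v (s p v)

noncomputable def histStep (G : Game P V) (σ : P → Strat V) :
    List V × V → List V × V :=
  fun x => (x.1 ++ [x.2], σ (G.owner x.2) x.1 x.2)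

/-- The unique play from `v0` consistent with the strategy profile `σ`. -/
noncomputable def outcome (G : Game P V) (σ : P → Strat V) (v0 : V) (k : ℕ) : V :=
  ((histStep G σ)^[k] ([], v0)).2

/-- Replace the strategy of player `i` by `s` in the profile `σ`. -/
noncomputable def updProfile (σ : P → Strat V) (i : P) (s : Strat V) : P → Strat V :=
  fun j => if j = i then s else σ j

/-- Nash equilibrium for the quantitative (cost-minimizing) semantics. -/
def IsNE (G : Game P V) (σ : P → Strat V) (v0 : V) : Prop :=
  (∀ i, IsStrategy G.toArena (σ i)) ∧
  ∀ (i : P) (s : Strat V), IsStrategy G.toArena s →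
    cost (G.F i) (outcome G σ v0) ≤ cost (G.F i) (outcome G (updProfile σ i s) v0)

/-- Nash equilibrium for the qualitative (gain-maximizing) semantics. -/
def IsNEqual (G : Game P V) (σ : P → Strat V) (v0 : V) : Prop :=
  (∀ i, IsStrategy G.toArena (σ i)) ∧
  ∀ (i : P) (s : Strat V), IsStrategy G.toArena s →
    gain (G.F i) (outcome G (updProfile σ i s) v0) ≤ gain (G.F i) (outcome G σ v0)

/-- The profile in which player `i` plays `s` and all other players (the
coalition `-i`) jointly play `t`. -/
noncomputable def coalProfile (i : P) (s t : Strat V) : P → Strat V :=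
  fun j => if j = i then s else t

/-- Value of the coalitional zero-sum game `G_i` from `v`: player `i`
minimizes the first hitting time of `F i` against the coalition. -/
noncomputable def val (G : Game P V) (i : P) (v : V) : ℕ∞ :=
  ⨅ s : {s : Strat V // IsStrategy G.toArena s},
    ⨆ t : {t : Strat V // IsStrategy G.toArena t},
      cost (G.F i) (outcome G (coalProfile i s.1 t.1) v)

/-- A positional (memoryless) strategy only depends on the current vertex. -/
def Positional (s : Strat V) : Prop := ∀ p q v, s p v = s q v

/-- An optimal strategy for the minimizer (player `i`) in `G_i`. -/
def OptimalMin (G : Game P V) (i : P) (s : Strat V) : Prop :=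
  IsStrategy G.toArena s ∧
  ∀ (v : V) (t : Strat V), IsStrategy G.toArena t →
    cost (G.F i) (outcome G (coalProfile i s t) v) ≤ val G i v

/-- An optimal strategy for the maximizer (the coalition `-i`) in `G_i`. -/
def OptimalMax (G : Game P V) (i : P) (t : Strat V) : Prop :=
  IsStrategy G.toArena t ∧
  ∀ (v : V) (s : Strat V), IsStrategy G.toArena s →
    val G i v ≤ cost (G.F i) (outcome G (coalProfile i s t) v)

/-- `λ`-consistency of a play. -/
def lambdaConsistent (G : Game P V) (lam : V → ℕ∞) (ρ : ℕ → V) : Prop :=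
  ∀ (i : P) (k : ℕ), G.owner (ρ k) = i → (∀ n ≤ k, ρ n ∉ G.F i) →
    cost (G.F i) (fun j => ρ (k + j)) ≤ lam (ρ k)

/-- A lasso `hℓ^ω` of length `|hℓ| ≤ L`. -/
def IsLasso (ρ : ℕ → V) (L : ℕ) : Prop :=
  ∃ n p, 0 < p ∧ n + p ≤ L ∧ ∀ k, n ≤ k → ρ (k + p) = ρ k

/-- The play obtained by removing the cycle `ρₖ…ρₖ₊ₗ` from `ρ`. -/
def removeCycle (ρ : ℕ → V) (k l : ℕ) : ℕ → V :=
  fun j => if j ≤ k then ρ j else ρ (j + l)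

/-- `ρₖ…ρₖ₊ₗ` is an unnecessary cycle: it is a (nontrivial) cycle inside of
which no new player visits his target set. -/
def UnnecessaryCycle (F : P → Set V) (ρ : ℕ → V) (k l : ℕ) : Prop :=
  0 < l ∧ ρ k = ρ (k + l) ∧ visitPrefix F ρ k = visitPrefix F ρ (k + l)

/-- The set of cost profiles of plays from `v0`. -/
def costProfiles (G : Game P V) (v0 : V) : Set (P → ℕ∞) :=
  {c | ∃ ρ, IsPlay G.toArena ρ ∧ ρ 0 = v0 ∧ c = fun i => cost (G.F i) ρ}

/-- The set of gain profiles of plays from `v0`. -/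
def gainProfiles (G : Game P V) (v0 : V) : Set (P → ℕ) :=
  {c | ∃ ρ, IsPlay G.toArena ρ ∧ ρ 0 = v0 ∧ c = fun i => gain (G.F i) ρ}

/-- Pareto optimality for cost profiles: minimal in the componentwise order. -/
def ParetoMinimal {α : Type} [Preorder α] (S : Set α) (p : α) : Prop :=
  p ∈ S ∧ ∀ q ∈ S, q ≤ p → q = p

/-- Pareto optimality for gain profiles: maximal in the componentwise order. -/
def ParetoMaximal {α : Type} [Preorder α] (S : Set α) (p : α) : Prop :=
  p ∈ S ∧ ∀ q ∈ S, p ≤ q → q = p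

/-- `h ++ [v]` is a history from `v0`: a finite path starting at `v0`
whose current (last) vertex is `v`; `h` is the strict past. -/
def IsHist (A : Arena V) (v0 : V) (h : List V) (v : V) : Prop :=
  (h ++ [v]).head? = some v0 ∧ List.Chain' A.E (h ++ [v])

/-- The strategy `s` shifted by the past history `h` (i.e. `s|h`). -/
noncomputable def shiftStrat (s : Strat V) (h : List V) : Strat V :=
  fun p v => s (h ++ p) v

/-- Gain of a play `ρ` in the subgame after past history `h`:
`1` iff `h·ρ` visits `F`. -/
noncomputable def gainAfter (F : Set V) (h : List V) (ρ : ℕ → V) : ℕ :=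
  if (∃ x ∈ h, x ∈ F) ∨ (∃ n, ρ n ∈ F) then 1 else 0

/-- Subgame perfect equilibrium for qualitative reachability games:
in every subgame after a history from `v0`, no player can strictly
increase his gain by a unilateral deviation. -/
def IsSPEqual (G : Game P V) (σ : P → Strat V) (v0 : V) : Prop :=
  (∀ i, IsStrategy G.toArena (σ i)) ∧
  ∀ (h : List V) (v : V), IsHist G.toArena v0 h v →
    ∀ (i : P) (s : Strat V), IsStrategy G.toArena s →
      gainAfter (G.F i) h
          (outcome G (updProfile (fun j => shiftStrat (σ j) h) i s) v) ≤
        gainAfter (G.F i) h (outcome G (fun j => shiftStrat (σ j) h) v)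

/-!
Suppose player `i` first reaches his target at time `m > |V|·|Π|`. Before time `m` the set of
players who have already visited their targets grows monotonically and never contains `i`, so
its cardinality stays below `|Π|`. By pigeonhole two times `k < k' < m` carry the same vertex
and the same cardinality, hence the same set of visited players: `ρₖ…ρₖ'` is an unnecessary
cycle. Cutting it out gives a play from `v₀` on which no player's cost increases while player
`i`'s cost drops, contradicting Pareto optimality.
-/

lemma cost_le_of_mem {F : Set V} {ρ : ℕ → V} {n : ℕ} (h : ρ n ∈ F) : cost F ρ ≤ n :=
  iInf₂_le n h

lemma cost_le_cost_of_forall_exists_le {F : Set V} {ρ ρ' : ℕ → V}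
    (h : ∀ n, ρ n ∈ F → ∃ n' ≤ n, ρ' n' ∈ F) : cost F ρ' ≤ cost F ρ := by
  refine le_iInf₂ fun n hn => ?_
  obtain ⟨n', hn'n, hn'⟩ := h n hn
  exact (cost_le_of_mem hn').trans (mod_cast hn'n)

lemma exists_cost_eq_of_mem_visit {F : P → Set V} {ρ : ℕ → V} {i : P}
    (hi : i ∈ visit F ρ) :
    ∃ m : ℕ, cost (F i) ρ = m ∧ ρ m ∈ F i ∧ ∀ n < m, ρ n ∉ F i := by
  refine ⟨Nat.find hi, le_antisymm (cost_le_of_mem (Nat.find_spec hi)) ?_,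
    Nat.find_spec hi, fun n hn => Nat.find_min hi hn⟩
  exact le_iInf₂ fun k hk => mod_cast Nat.find_min' hi hk

lemma outcome_isPlay (G : Game P V) {σ : P → Strat V} (hσ : ∀ i, IsStrategy G.toArena (σ i))
    (v0 : V) : IsPlay G.toArena (outcome G σ v0) := by
  intro k
  simp only [outcome, Function.iterate_succ_apply', histStep]
  exact hσ _ _ _

lemma visitPrefix_mono (F : P → Set V) (ρ : ℕ → V) : Monotone (visitPrefix F ρ) :=
  fun _ _ hkk' _ ⟨n, hn, hmem⟩ => ⟨n, hn.trans hkk', hmem⟩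

lemma visitPrefix_eq_of_ncard_eq [Finite P] (F : P → Set V) (ρ : ℕ → V) {k k' : ℕ}
    (hkk' : k ≤ k') (h : (visitPrefix F ρ k).ncard = (visitPrefix F ρ k').ncard) :
    visitPrefix F ρ k = visitPrefix F ρ k' :=
  Set.eq_of_subset_of_ncard_le (visitPrefix_mono F ρ hkk') h.ge

lemma ncard_visitPrefix_lt [Fintype P] {F : P → Set V} {ρ : ℕ → V} {i : P} {k : ℕ}
    (hi : ∀ n ≤ k, ρ n ∉ F i) : (visitPrefix F ρ k).ncard < Fintype.card P := by
  rw [← Nat.card_eq_fintype_card]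
  refine Set.ncard_lt_card fun h => ?_
  obtain ⟨n, hn, hmem⟩ : i ∈ visitPrefix F ρ k := h ▸ Set.mem_univ i
  exact hi n hn hmem

theorem exists_unnecessaryCycle_of_card_mul_card_lt [Fintype V] [Fintype P] (F : P → Set V)
    (ρ : ℕ → V) {i : P} {m : ℕ} (hi : ∀ n < m, ρ n ∉ F i)
    (hm : Fintype.card V * Fintype.card P < m) :
    ∃ k l, UnnecessaryCycle F ρ k l ∧ k + l < m := by
  let f : Fin m → V × Fin (Fintype.card P) := fun k =>
    (ρ k, ⟨(visitPrefix F ρ k).ncard,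
      ncard_visitPrefix_lt fun n hn => hi n (hn.trans_lt k.2)⟩)
  have cycle_of_lt : ∀ a b : Fin m, a < b → f a = f b →
      ∃ k l, UnnecessaryCycle F ρ k l ∧ k + l < m := by
    intro a b hab hf
    obtain ⟨hρ, hcard⟩ := Prod.ext_iff.mp hf
    refine ⟨a, b - a, ⟨by omega, ?_, ?_⟩, by omega⟩ <;> rw [Nat.add_sub_cancel' hab.le]
    · exact hρ
    · exact visitPrefix_eq_of_ncard_eq F ρ hab.le (Fin.val_eq_of_eq hcard)
  obtain ⟨a, b, hab, hf⟩ := Fintype.exists_ne_map_eq_of_card_lt f (by simpa using hm)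
  rcases hab.lt_or_gt with hab | hab
  · exact cycle_of_lt a b hab hf
  · exact cycle_of_lt b a hab hf.symm

section removeCycle

variable {ρ : ℕ → V} {k l : ℕ}

lemma removeCycle_of_le {j : ℕ} (hj : j ≤ k) : removeCycle ρ k l j = ρ j := if_pos hj

lemma removeCycle_of_lt {j : ℕ} (hj : k < j) : removeCycle ρ k l j = ρ (j + l) :=
  if_neg hj.not_ge

lemma removeCycle_sub {n : ℕ} (hn : k + l < n) : removeCycle ρ k l (n - l) = ρ n := by
  rw [removeCycle_of_lt (by omega), Nat.sub_add_cancel (by omega)]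

lemma IsPlay.removeCycle {A : Arena V} (hρ : IsPlay A ρ) (hcyc : ρ k = ρ (k + l)) :
    IsPlay A (removeCycle ρ k l) := by
  intro j
  rcases lt_trichotomy j k with hj | rfl | hj
  · rw [removeCycle_of_le hj.le, removeCycle_of_le hj]
    exact hρ j
  · rw [removeCycle_of_le le_rfl, removeCycle_of_lt (lt_add_one j), hcyc,
      Nat.add_right_comm j 1 l]
    exact hρ (j + l)
  · rw [removeCycle_of_lt hj, removeCycle_of_lt (hj.trans (lt_add_one j)),
      Nat.add_right_comm j 1 l]
    exact hρ (j + l)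

/-- A visit inside the removed cycle is already a visit before it, since the cycle is
unnecessary. -/
lemma cost_removeCycle_le {F : P → Set V} (hcyc : UnnecessaryCycle F ρ k l) (p : P) :
    cost (F p) (removeCycle ρ k l) ≤ cost (F p) ρ := by
  refine cost_le_cost_of_forall_exists_le fun n hn => ?_
  by_cases hnk : n ≤ k
  · exact ⟨n, le_rfl, (removeCycle_of_le hnk).symm ▸ hn⟩
  by_cases hnkl : n ≤ k + l
  · have hp : p ∈ visitPrefix F ρ k := hcyc.2.2 ▸ ⟨n, hnkl, hn⟩
    obtain ⟨n', hn'k, hn'⟩ := hp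
    exact ⟨n', by omega, (removeCycle_of_le hn'k).symm ▸ hn'⟩
  · exact ⟨n - l, Nat.sub_le n l, (removeCycle_sub (not_le.mp hnkl)).symm ▸ hn⟩

lemma cost_removeCycle_lt {F : Set V} {n : ℕ} (hl : 0 < l) (hn : k + l < n) (hmem : ρ n ∈ F) :
    cost F (removeCycle ρ k l) < n :=
  (cost_le_of_mem ((removeCycle_sub hn).symm ▸ hmem)).trans_lt
    (mod_cast Nat.sub_lt (show 0 < n by omega) hl)

end removeCycle

/-- an NE with a Pareto optimal cost profile has cost at most
`|V|·|Π|` for every player who visits his target set. -/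
theorem stmt12 {V P : Type} [Fintype V] [Fintype P] (G : Game P V) (v0 : V)
    (σ : P → Strat V) (hNE : IsNE G σ v0)
    (hpar : ParetoMinimal (costProfiles G v0)
      (fun i => cost (G.F i) (outcome G σ v0))) :
    ∀ i ∈ visit G.F (outcome G σ v0),
      cost (G.F i) (outcome G σ v0) ≤
        ((Fintype.card V * Fintype.card P : ℕ) : ℕ∞) := by
  intro i hi
  set ρ := outcome G σ v0
  by_contra! hgt
  obtain ⟨m, hcost, hmem, hfirst⟩ := exists_cost_eq_of_mem_visit hi
  rw [hcost] at hgt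
  obtain ⟨k, l, hcyc, hklm⟩ :=
    exists_unnecessaryCycle_of_card_mul_card_lt G.F ρ hfirst (mod_cast hgt)
  have hprofile : (fun p => cost (G.F p) (removeCycle ρ k l)) ∈ costProfiles G v0 :=
    ⟨_, (outcome_isPlay G hNE.1 v0).removeCycle hcyc.2.1, removeCycle_of_le k.zero_le, rfl⟩
  have hsame := congrFun (hpar.2 _ hprofile fun p => cost_removeCycle_le hcyc p) i
  exact (cost_removeCycle_lt hcyc.1 hklm hmem).ne (hsame.trans hcost)
end

section
/- In a two-player zero-sum quantitative reachability (coalitional) game between a minimizer Min with target set F and a maximizer Max on a finite arena, the game is determined: for every vertex v, inf over Min strategies of sup over Max strategies of the first hitting time of F from v equals sup over Max strategies of inf over Min strategies of the same quantity. -/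
open scoped Classical

variable {V P : Type}

/-! Let `attractor n` be the set of vertices from which Min can force a visit to `F` within `n`
steps, and `attractorRank v ∈ ℕ∞` the least such `n`. If Min always moves to a successor of least
rank, the rank drops by at least one at every step taken outside `F`, so the cost is at most the
rank of the initial vertex whatever Max does. If Max always moves to a successor of greatest rank,
the rank drops by at most one per step and vanishes on `F`, so the cost is at least that rank
whatever Min does. Both positional strategies thus pin inf-sup and sup-inf to the rank, and
sup-inf ≤ inf-sup holds in any game. -/

section Cost

variable {V : Type} {F : Set V} {ρ : ℕ → V}

theorem le_cost_iff {c : ℕ∞} : c ≤ cost F ρ ↔ ∀ k, ρ k ∈ F → c ≤ k := by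
  simp only [cost, le_iInf_iff]

theorem cost_le_of_mem_s19 {k : ℕ} (hk : ρ k ∈ F) : cost F ρ ≤ k :=
  iInf₂_le k hk

theorem add_le_of_forall_succ_add_one_le {r : V → ℕ∞}
    (hr : ∀ k, ρ k ∉ F → r (ρ (k + 1)) + 1 ≤ r (ρ k)) :
    ∀ k, (∀ j < k, ρ j ∉ F) → r (ρ k) + k ≤ r (ρ 0)
  | 0, _ => by simp
  | k + 1, hk => calc
      r (ρ (k + 1)) + (k + 1 : ℕ) = r (ρ (k + 1)) + 1 + k := by push_cast; ring
      _ ≤ r (ρ k) + k := by gcongr; exact hr k (hk k k.lt_succ_self)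
      _ ≤ r (ρ 0) :=
        add_le_of_forall_succ_add_one_le hr k fun j hj => hk j (hj.trans k.lt_succ_self)

theorem cost_le_of_forall_succ_add_one_le (r : V → ℕ∞)
    (hr : ∀ k, ρ k ∉ F → r (ρ (k + 1)) + 1 ≤ r (ρ k)) : cost F ρ ≤ r (ρ 0) := by
  by_contra! hlt
  obtain ⟨n, hn⟩ := ENat.ne_top_iff_exists.mp (hlt.trans_le le_top).ne
  have hmiss : ∀ j < n + 1, ρ j ∉ F := by
    intro j hj hF
    have : cost F ρ ≤ r (ρ 0) :=
      (cost_le_of_mem_s19 hF).trans (by rw [← hn]; exact_mod_cast Nat.lt_succ_iff.mp hj)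
    exact this.not_gt hlt
  have hdrop := add_le_of_forall_succ_add_one_le hr (n + 1) hmiss
  rw [← hn] at hdrop
  exact n.not_succ_le_self (by exact_mod_cast le_add_self.trans hdrop)

theorem le_cost_of_forall_le_succ_add_one (r : V → ℕ∞) (hF : ∀ v ∈ F, r v = 0)
    (hr : ∀ k, r (ρ k) ≤ r (ρ (k + 1)) + 1) : r (ρ 0) ≤ cost F ρ := by
  have hdrift : ∀ k, r (ρ 0) ≤ r (ρ k) + k := by
    intro k
    induction k with
    | zero => simp
    | succ k ih => calc
        r (ρ 0) ≤ r (ρ (k + 1)) + 1 + k := ih.trans (by gcongr; exact hr k)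
        _ = r (ρ (k + 1)) + (k + 1 : ℕ) := by push_cast; ring
  refine le_cost_iff.mpr fun k hk => ?_
  simpa [hF _ hk] using hdrift k

end Cost

section Attractor

variable {V : Type} (A : Arena V) (owner : V → Bool)

/-- Controllable predecessors of `S`: the vertices from which Min, the owner of
`{v | owner v = true}`, can force the next vertex into `S`. -/
def cpre (S : Set V) : Set V :=
  {v | (owner v = true ∧ ∃ w, A.E v w ∧ w ∈ S) ∨ (owner v = false ∧ ∀ w, A.E v w → w ∈ S)}

def attractor (F : Set V) : ℕ → Set V
  | 0 => F
  | n + 1 => attractor F n ∪ cpre A owner (attractor F n)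

noncomputable def attractorRank (F : Set V) (v : V) : ℕ∞ :=
  ⨅ (n : ℕ) (_ : v ∈ attractor A owner F n), (n : ℕ∞)

variable {A owner} {F : Set V}

theorem cpre_mono : Monotone (cpre A owner) := by
  rintro S T hST v (⟨ho, w, hvw, hw⟩ | ⟨ho, hall⟩)
  · exact Or.inl ⟨ho, w, hvw, hST hw⟩
  · exact Or.inr ⟨ho, fun w hvw => hST (hall w hvw)⟩

theorem attractor_mono : Monotone (attractor A owner F) :=
  monotone_nat_of_le_succ fun _ => Set.subset_union_left

theorem attractor_succ_subset (n : ℕ) :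
    attractor A owner F (n + 1) ⊆ F ∪ cpre A owner (attractor A owner F n) := by
  induction n with
  | zero => exact subset_rfl
  | succ n ih =>
    refine Set.union_subset (ih.trans ?_) Set.subset_union_right
    exact Set.union_subset_union_right _ (cpre_mono (attractor_mono n.le_succ))

theorem attractorRank_le_coe_iff {v : V} {n : ℕ} :
    attractorRank A owner F v ≤ n ↔ v ∈ attractor A owner F n := by
  refine ⟨fun h => ?_, fun h => iInf₂_le n h⟩
  by_contra hv
  have : ((n + 1 : ℕ) : ℕ∞) ≤ attractorRank A owner F v := le_iInf₂ fun m hm => by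
    exact_mod_cast lt_of_not_ge fun hmn => hv (attractor_mono hmn hm)
  exact n.not_succ_le_self (by exact_mod_cast this.trans h)

theorem attractorRank_eq_zero_of_mem {v : V} (hv : v ∈ F) : attractorRank A owner F v = 0 :=
  le_zero_iff.mp <| by
    exact_mod_cast attractorRank_le_coe_iff.mpr (show v ∈ attractor A owner F 0 from hv)

theorem attractorRank_le_add_one_of_forall {v w : V}
    (h : ∀ m, w ∈ attractor A owner F m → v ∈ cpre A owner (attractor A owner F m)) :
    attractorRank A owner F v ≤ attractorRank A owner F w + 1 := by
  rcases eq_top_or_lt_top (attractorRank A owner F w) with hw | hw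
  · simp [hw]
  obtain ⟨m, hm⟩ := ENat.ne_top_iff_exists.mp hw.ne
  rw [← hm]
  exact_mod_cast attractorRank_le_coe_iff.mpr
    (Set.subset_union_right (h m (attractorRank_le_coe_iff.mp hm.ge)))

theorem add_one_le_attractorRank_of_forall {v w : V} (hv : v ∉ F)
    (h : ∀ m, v ∈ cpre A owner (attractor A owner F m) → w ∈ attractor A owner F m) :
    attractorRank A owner F w + 1 ≤ attractorRank A owner F v := by
  refine le_iInf₂ fun n hn => ?_
  rcases n with _ | m
  · exact absurd hn hv
  rcases attractor_succ_subset m hn with hF | hcpre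
  · exact absurd hF hv
  push_cast
  gcongr
  exact attractorRank_le_coe_iff.mpr (h m hcpre)

end Attractor

section Outcome

variable {P V : Type} (G : Game P V) (σ : P → Strat V) (v : V)

theorem outcome_succ (k : ℕ) :
    outcome G σ v (k + 1) =
      σ (G.owner (outcome G σ v k)) ((histStep G σ)^[k] ([], v)).1 (outcome G σ v k) := by
  simp only [outcome, Function.iterate_succ_apply']
  rfl

theorem isPlay_outcome (hσ : ∀ i, IsStrategy G.toArena (σ i)) :
    IsPlay G.toArena (outcome G σ v) := fun k => by
  rw [outcome_succ]
  exact hσ _ _ _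

theorem outcome_succ_of_positional {i : P} {f : V → V} (hσ : σ i = fun _ => f) {k : ℕ}
    (hk : G.owner (outcome G σ v k) = i) : outcome G σ v (k + 1) = f (outcome G σ v k) := by
  rw [outcome_succ, hk, hσ]

end Outcome

section AttractorStrategies

variable {V : Type} (A : Arena V) (owner : V → Bool) (F : Set V)

noncomputable def minRankSucc (v : V) : V :=
  Function.argminOn (attractorRank A owner F) {w | A.E v w} (A.succ v)

noncomputable def maxRankSucc [Finite V] (v : V) : V :=
  (Set.exists_max_image {w | A.E v w} (attractorRank A owner F) (Set.toFinite _)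
    (A.succ v)).choose

theorem minRankSucc_edge (v : V) : A.E v (minRankSucc A owner F v) :=
  Function.argminOn_mem _ _ _

theorem attractorRank_minRankSucc_le {v w : V} (hvw : A.E v w) :
    attractorRank A owner F (minRankSucc A owner F v) ≤ attractorRank A owner F w :=
  Function.argminOn_le _ _ hvw

theorem maxRankSucc_spec [Finite V] (v : V) :
    A.E v (maxRankSucc A owner F v) ∧
      ∀ w, A.E v w →
        attractorRank A owner F w ≤ attractorRank A owner F (maxRankSucc A owner F v) :=
  (Set.exists_max_image {w | A.E v w} (attractorRank A owner F) (Set.toFinite _)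
    (A.succ v)).choose_spec

variable {A owner F} {ρ : ℕ → V}

theorem cost_le_attractorRank_of_minRankSucc (hplay : IsPlay A ρ)
    (hmin : ∀ k, owner (ρ k) = true → ρ (k + 1) = minRankSucc A owner F (ρ k)) :
    cost F ρ ≤ attractorRank A owner F (ρ 0) := by
  refine cost_le_of_forall_succ_add_one_le _ fun k hk => ?_
  cases ho : owner (ρ k)
  · refine add_one_le_attractorRank_of_forall hk fun m hm => ?_
    rcases hm with ⟨ho', -⟩ | ⟨-, hall⟩
    · simp [ho] at ho'
    · exact hall _ (hplay k)
  · rw [hmin k ho]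
    refine add_one_le_attractorRank_of_forall hk fun m hm => ?_
    rcases hm with ⟨-, w, hvw, hw⟩ | ⟨ho', -⟩
    · exact attractorRank_le_coe_iff.mp
        ((attractorRank_minRankSucc_le A owner F hvw).trans (attractorRank_le_coe_iff.mpr hw))
    · simp [ho] at ho'

theorem attractorRank_le_cost_of_maxRankSucc [Finite V] (hplay : IsPlay A ρ)
    (hmax : ∀ k, owner (ρ k) = false → ρ (k + 1) = maxRankSucc A owner F (ρ k)) :
    attractorRank A owner F (ρ 0) ≤ cost F ρ := by
  refine le_cost_of_forall_le_succ_add_one _ (fun _ => attractorRank_eq_zero_of_mem) fun k => ?_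
  cases ho : owner (ρ k)
  · rw [hmax k ho]
    refine attractorRank_le_add_one_of_forall fun m hm => Or.inr ⟨ho, fun w hw => ?_⟩
    exact attractorRank_le_coe_iff.mp
      (((maxRankSucc_spec A owner F _).2 w hw).trans (attractorRank_le_coe_iff.mpr hm))
  · exact attractorRank_le_add_one_of_forall fun m hm => Or.inl ⟨ho, _, hplay k, hm⟩

end AttractorStrategies

/-- two-player zero-sum quantitative reachability games are
determined: inf-sup equals sup-inf of the first hitting time of `F`.
Player `Min` owns the vertices with `owner v = true`. -/
theorem stmt19 {V : Type} [Fintype V] (A : Arena V) (owner : V → Bool)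
    (F : Set V) (v : V) :
    (⨅ s : {s : Strat V // IsStrategy A s},
      ⨆ t : {t : Strat V // IsStrategy A t},
        cost F (outcome (Game.mk A owner (fun _ => F))
          (fun b => if b then s.1 else t.1) v)) =
    (⨆ t : {t : Strat V // IsStrategy A t},
      ⨅ s : {s : Strat V // IsStrategy A s},
        cost F (outcome (Game.mk A owner (fun _ => F))
          (fun b => if b then s.1 else t.1) v)) := by
  refine le_antisymm ?_ (iSup_iInf_le_iInf_iSup _)
  let G : Game Bool V := Game.mk A owner fun _ => F
  let sMin : {s : Strat V // IsStrategy A s} :=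
    ⟨fun _ => minRankSucc A owner F, fun _ => minRankSucc_edge A owner F⟩
  let tMax : {t : Strat V // IsStrategy A t} :=
    ⟨fun _ => maxRankSucc A owner F, fun _ u => (maxRankSucc_spec A owner F u).1⟩
  have hplay (s t : {s : Strat V // IsStrategy A s}) :
      IsPlay A (outcome G (fun b => if b then s.1 else t.1) v) :=
    isPlay_outcome G _ v (Bool.forall_bool.mpr ⟨t.2, s.2⟩)
  calc _ ≤ ⨆ t : {t : Strat V // IsStrategy A t},
          cost F (outcome G (fun b => if b then sMin.1 else t.1) v) := iInf_le _ sMin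
    _ ≤ attractorRank A owner F v := iSup_le fun t =>
        cost_le_attractorRank_of_minRankSucc (hplay sMin t)
          fun _ ho => outcome_succ_of_positional G _ v rfl ho
    _ ≤ ⨅ s : {s : Strat V // IsStrategy A s},
          cost F (outcome G (fun b => if b then s.1 else tMax.1) v) := le_iInf fun s =>
        attractorRank_le_cost_of_maxRankSucc (hplay s tMax)
          fun _ ho => outcome_succ_of_positional G _ v rfl ho
    _ ≤ _ := le_iSup_of_le tMax le_rfl
end
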